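/- arXiv:2210.13211 — 7 statements merged into one kernel-verified Lean document; each statement's English description precedes it below -/
import Mathlib

section
/- Let P, Q ∈ GL⁺(H) be such that P, Q and the frame operator S_Λ pairwise commute. If (Λ_w)_{w∈Ω} is a (P, Q)-controlled continuous g-frame with bounds A and B, then (Λ_w)_{w∈Ω} is a continuous g-frame with lower bound A/‖(PQ)^{1/2}‖² and upper bound B·‖(PQ)^{-1/2}‖², i.e. (A/‖(PQ)^{1/2}‖²)·‖f‖² ≤ ∫_Ω ‖Λ_w f‖² dμ(w) ≤ B·‖(PQ)^{-1/2}‖²·‖f‖² for every f ∈ H. -/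
open MeasureTheory
open scoped ComplexInnerProductSpace

/-!
The frame operator `S` turns the controlled expression into `⟪Q S P f, f⟫`. Since `S` commutes
with `P * Q`, it commutes with its positive square root `R`, so `Q S P = R S R` and the controlled
expression at `f` is the ordinary frame expression `∫ ‖Λ_w (R f)‖²`. Substituting `f = R⁻¹ g`
and estimating `‖g‖ ≤ ‖R‖ ‖R⁻¹ g‖` and `‖R⁻¹ g‖ ≤ ‖R⁻¹‖ ‖g‖` gives the two bounds.
-/

theorem Commute.of_mul_self_eq_of_nonneg {A : Type*} [PartialOrder A] [Ring A] [StarRing A]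
    [TopologicalSpace A] [IsTopologicalRing A] [T2Space A] [StarOrderedRing A] [Algebra ℝ A]
    [ContinuousFunctionalCalculus ℝ A IsSelfAdjoint] [NonnegSpectrumClass ℝ A]
    {a b r : A} (hr : 0 ≤ r) (hra : r * r = a) (h : Commute a b) : Commute r b := by
  rw [← CFC.sqrt_unique hra hr, CFC.sqrt_eq_cfc]
  exact h.cfc_nnreal _

theorem ContinuousLinearMap.norm_apply_sq_div_opNorm_sq_le {𝕜 E F : Type*}
    [NontriviallyNormedField 𝕜] [SeminormedAddCommGroup E] [SeminormedAddCommGroup F]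
    [NormedSpace 𝕜 E] [NormedSpace 𝕜 F] (T : E →L[𝕜] F) (x : E) :
    ‖T x‖ ^ 2 / ‖T‖ ^ 2 ≤ ‖x‖ ^ 2 := by
  refine div_le_of_le_mul₀ (by positivity) (by positivity) ?_
  rw [← mul_pow, mul_comm]
  gcongr
  exact T.le_opNorm x

section FrameOperator

variable {𝕜 H L Ω : Type*} [RCLike 𝕜]
  [NormedAddCommGroup H] [InnerProductSpace 𝕜 H]
  [NormedAddCommGroup L] [InnerProductSpace 𝕜 L]
  [MeasurableSpace Ω] {μ : Measure Ω} {Λ : Ω → H →L[𝕜] L} {S : H →L[𝕜] H}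

theorem inner_frameOperator_self_eq_integral_norm_sq
    (hS : ∀ f g : H, inner 𝕜 (S f) g = ∫ w, inner 𝕜 (Λ w f) (Λ w g) ∂μ) (f : H) :
    inner 𝕜 (S f) f = ((∫ w, ‖Λ w f‖ ^ 2 ∂μ : ℝ) : 𝕜) := by
  simp_rw [hS, inner_self_eq_norm_sq_to_K, ← RCLike.ofReal_pow]
  exact integral_ofReal

theorem inner_apply_map_map_eq_inner_apply_sqrt [CompleteSpace H] {P Q R : H →L[𝕜] H}
    (hQ : IsSelfAdjoint Q) (hR : IsSelfAdjoint R) (hRsq : R * R = P * Q)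
    (hPQ : Commute P Q) (hQS : Commute Q S) (hSR : Commute S R) (f : H) :
    inner 𝕜 (S (P f)) (Q f) = inner 𝕜 (S (R f)) (R f) := by
  have hop : Q * S * P = R * S * R := by
    rw [hQS.eq, mul_assoc, ← hPQ.eq, ← hRsq, ← mul_assoc, hSR.eq]
  calc inner 𝕜 (S (P f)) (Q f) = inner 𝕜 ((Q * S * P) f) f := (hQ.isSymmetric _ _).symm
    _ = inner 𝕜 (R (S (R f))) f := by rw [hop]; rfl
    _ = inner 𝕜 (S (R f)) (R f) := hR.isSymmetric _ _

theorem integral_inner_map_map_eq_integral_norm_sq_sqrt [CompleteSpace H] {P Q R : H →L[𝕜] H}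
    (hS : ∀ f g : H, inner 𝕜 (S f) g = ∫ w, inner 𝕜 (Λ w f) (Λ w g) ∂μ)
    (hQ : IsSelfAdjoint Q) (hR : IsSelfAdjoint R) (hRsq : R * R = P * Q)
    (hPQ : Commute P Q) (hQS : Commute Q S) (hSR : Commute S R) (f : H) :
    ∫ w, inner 𝕜 (Λ w (P f)) (Λ w (Q f)) ∂μ = ((∫ w, ‖Λ w (R f)‖ ^ 2 ∂μ : ℝ) : 𝕜) := by
  rw [← hS, inner_apply_map_map_eq_inner_apply_sqrt hQ hR hRsq hPQ hQS hSR,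
    inner_frameOperator_self_eq_integral_norm_sq hS]

end FrameOperator

theorem controlled_continuous_g_frame_is_continuous_g_frame_general
    {H L Ω : Type*}
    [NormedAddCommGroup H] [InnerProductSpace ℂ H] [CompleteSpace H]
    [NormedAddCommGroup L] [InnerProductSpace ℂ L]
    [MeasurableSpace Ω] (μ : Measure Ω)
    (Λ : Ω → H →L[ℂ] L)
    -- P, Q ∈ GL⁺(H)
    (P Q : H →L[ℂ] H)
    (hQ : Q.IsPositive)
    -- the frame operator S_Λ
    (SΛ : H →L[ℂ] H)
    (hSΛ : ∀ f g : H, ⟪SΛ f, g⟫ = ∫ w, ⟪Λ w f, Λ w g⟫ ∂μ)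
    -- P, Q, S_Λ pairwise commute
    (hPQ : P * Q = Q * P) (hPS : P * SΛ = SΛ * P) (hQS : Q * SΛ = SΛ * Q)
    -- R = (PQ)^{1/2}, the positive square root of PQ, with inverse Rinv = (PQ)^{-1/2}
    (R Rinv : H →L[ℂ] H)
    (hR : R.IsPositive) (hRsq : R * R = P * Q)
    (hRinv : R * Rinv = 1 ∧ Rinv * R = 1)
    -- (Λ_w) is a (P, Q)-controlled continuous g-frame with bounds A, B
    (A B : ℝ) (hA : 0 < A) (hAB : A ≤ B)
    (hframe : ∀ f : H,
      A * ‖f‖ ^ 2 ≤ (∫ w, ⟪Λ w (P f), Λ w (Q f)⟫ ∂μ).re ∧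
      (∫ w, ⟪Λ w (P f), Λ w (Q f)⟫ ∂μ).re ≤ B * ‖f‖ ^ 2) :
    ∀ f : H,
      A / ‖R‖ ^ 2 * ‖f‖ ^ 2 ≤ ∫ w, ‖Λ w f‖ ^ 2 ∂μ ∧
      ∫ w, ‖Λ w f‖ ^ 2 ∂μ ≤ B * ‖Rinv‖ ^ 2 * ‖f‖ ^ 2 := by
  have hSR : Commute SΛ R :=
    (Commute.of_mul_self_eq_of_nonneg ((R.nonneg_iff_isPositive).mpr hR) hRsq
      (Commute.mul_left hPS hQS)).symm
  have hcontrolled (g : H) :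
      (∫ w, ⟪Λ w (P g), Λ w (Q g)⟫ ∂μ).re = ∫ w, ‖Λ w (R g)‖ ^ 2 ∂μ := by
    rw [integral_inner_map_map_eq_integral_norm_sq_sqrt hSΛ hQ.isSelfAdjoint hR.isSelfAdjoint
      hRsq hPQ hQS hSR]
    exact Complex.ofReal_re _
  intro f
  have hf : R (Rinv f) = f := DFunLike.congr_fun hRinv.1 f
  obtain ⟨hlower, hupper⟩ := hframe (Rinv f)
  rw [hcontrolled, hf] at hlower hupper
  constructor
  · calc A / ‖R‖ ^ 2 * ‖f‖ ^ 2 = A * (‖R (Rinv f)‖ ^ 2 / ‖R‖ ^ 2) := by rw [hf]; ring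
      _ ≤ A * ‖Rinv f‖ ^ 2 := by gcongr; exact R.norm_apply_sq_div_opNorm_sq_le _
      _ ≤ _ := hlower
  · calc _ ≤ B * ‖Rinv f‖ ^ 2 := hupper
      _ ≤ B * (‖Rinv‖ * ‖f‖) ^ 2 := by
        have hB : 0 < B := hA.trans_le hAB
        gcongr
        exact Rinv.le_opNorm f
      _ = B * ‖Rinv‖ ^ 2 * ‖f‖ ^ 2 := by ring

/-- If `(Λ_w)` is a `(P, Q)`-controlled continuous g-frame with bounds `A, B`
(where `P, Q ∈ GL⁺(H)` commute with each other and with the frame operator `S_Λ`), then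
`(Λ_w)` is a continuous g-frame with bounds `A/‖(PQ)^{1/2}‖²` and `B‖(PQ)^{-1/2}‖²`. -/
theorem controlled_continuous_g_frame_is_continuous_g_frame
    {H L Ω : Type*}
    [NormedAddCommGroup H] [InnerProductSpace ℂ H] [CompleteSpace H]
    [NormedAddCommGroup L] [InnerProductSpace ℂ L] [CompleteSpace L]
    [MeasurableSpace Ω] (μ : Measure Ω)
    (Λ : Ω → H →L[ℂ] L)
    (hmeas : ∀ f : H, AEStronglyMeasurable (fun w => Λ w f) μ)
    (hint : ∀ f : H, Integrable (fun w => ‖Λ w f‖ ^ 2) μ)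
    -- P, Q ∈ GL⁺(H)
    (P Q Pinv Qinv : H →L[ℂ] H)
    (hP : P.IsPositive) (hPinv : P * Pinv = 1 ∧ Pinv * P = 1)
    (hQ : Q.IsPositive) (hQinv : Q * Qinv = 1 ∧ Qinv * Q = 1)
    -- the frame operator S_Λ
    (SΛ : H →L[ℂ] H)
    (hSΛ : ∀ f g : H, ⟪SΛ f, g⟫ = ∫ w, ⟪Λ w f, Λ w g⟫ ∂μ)
    -- P, Q, S_Λ pairwise commute
    (hPQ : P * Q = Q * P) (hPS : P * SΛ = SΛ * P) (hQS : Q * SΛ = SΛ * Q)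
    -- R = (PQ)^{1/2}, the positive square root of PQ, with inverse Rinv = (PQ)^{-1/2}
    (R Rinv : H →L[ℂ] H)
    (hR : R.IsPositive) (hRsq : R * R = P * Q)
    (hRinv : R * Rinv = 1 ∧ Rinv * R = 1)
    -- (Λ_w) is a (P, Q)-controlled continuous g-frame with bounds A, B
    (A B : ℝ) (hA : 0 < A) (hAB : A ≤ B)
    (hBessel : ∃ B₀ > (0 : ℝ), ∀ f : H, ∫ w, ‖Λ w f‖ ^ 2 ∂μ ≤ B₀ * ‖f‖ ^ 2)
    (hframe : ∀ f : H,
      A * ‖f‖ ^ 2 ≤ (∫ w, ⟪Λ w (P f), Λ w (Q f)⟫ ∂μ).re ∧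
      (∫ w, ⟪Λ w (P f), Λ w (Q f)⟫ ∂μ).re ≤ B * ‖f‖ ^ 2) :
    ∀ f : H,
      A / ‖R‖ ^ 2 * ‖f‖ ^ 2 ≤ ∫ w, ‖Λ w f‖ ^ 2 ∂μ ∧
      ∫ w, ‖Λ w f‖ ^ 2 ∂μ ≤ B * ‖Rinv‖ ^ 2 * ‖f‖ ^ 2 :=
  controlled_continuous_g_frame_is_continuous_g_frame_general μ Λ P Q hQ SΛ hSΛ hPQ hPS hQS R Rinv
    hR hRsq hRinv A B hA hAB hframe
end

section
/- Let P, Q ∈ GL⁺(H) be such that P, Q and the frame operator S_Λ pairwise commute. Then for every f ∈ H, ∫_Ω ⟨Λ_w P f, Λ_w Q f⟩ dμ(w) = ∫_Ω ‖Λ_w (PQ)^{1/2} f‖² dμ(w); in particular the left-hand integral is a nonnegative real number. -/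
/-!
Since `R` is the positive square root of `P Q`, it lies in the continuous functional calculus of
`P Q`, so it commutes with `S_Λ` because `P Q` does. Hence `Q S_Λ P = S_Λ R R = R S_Λ R`, and moving
`Q` and `R` across the inner product turns `⟨S_Λ P f, Q f⟩` into `⟨S_Λ R f, R f⟩`; both sides of
the theorem are these inner products by the defining property of `S_Λ`.
-/

open MeasureTheory
open scoped ComplexInnerProductSpace

theorem CFC.commute_of_mul_self_eq {A : Type*} [NonUnitalCStarAlgebra A] [PartialOrder A]
    [StarOrderedRing A] {a b c : A} (hb : 0 ≤ b) (hba : b * b = a) (hc : Commute a c) :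
    Commute b c := by
  rw [← CFC.sqrt_unique hba hb]
  exact hc.cfcₙ_nnreal _

open scoped InnerProductSpace in
theorem integral_inner_self_eq_ofReal_integral_norm_sq {Ω 𝕜 E : Type*} [MeasurableSpace Ω]
    {μ : Measure Ω} [RCLike 𝕜] [NormedAddCommGroup E] [InnerProductSpace 𝕜 E] (g : Ω → E) :
    ∫ w, ⟪g w, g w⟫_𝕜 ∂μ = ((∫ w, ‖g w‖ ^ 2 ∂μ : ℝ) : 𝕜) := by
  simp_rw [inner_self_eq_norm_sq_to_K]
  exact_mod_cast integral_ofReal (𝕜 := 𝕜)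

namespace ContinuousLinearMap

variable {𝕜 E : Type*} [RCLike 𝕜] [NormedAddCommGroup E] [InnerProductSpace 𝕜 E] [CompleteSpace E]

open scoped InnerProductSpace in
theorem inner_apply_apply_eq_of_mul_self_eq {S P Q R : E →L[𝕜] E} (hQ : IsSelfAdjoint Q)
    (hR : IsSelfAdjoint R) (hRsq : R * R = P * Q) (hPQ : Commute P Q) (hQS : Commute Q S)
    (hRS : Commute R S) (f : E) :
    ⟪S (P f), Q f⟫_𝕜 = ⟪S (R f), R f⟫_𝕜 := by
  have key : Q * (S * P) = R * (S * R) :=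
    calc Q * (S * P) = S * (P * Q) := by rw [← mul_assoc, hQS.eq, mul_assoc, ← hPQ.eq]
      _ = S * R * R := by rw [← hRsq, mul_assoc]
      _ = R * (S * R) := (hRS.mul_right (.refl R)).eq.symm
  calc ⟪S (P f), Q f⟫_𝕜 = ⟪(Q * (S * P)) f, f⟫_𝕜 := hQ.isSymmetric _ _ |>.symm
    _ = ⟪(R * (S * R)) f, f⟫_𝕜 := by rw [key]
    _ = ⟪S (R f), R f⟫_𝕜 := hR.isSymmetric _ _

end ContinuousLinearMap

theorem controlled_inner_integral_eq_sqrt_norm_integral_general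
    {H L Ω : Type*}
    [NormedAddCommGroup H] [InnerProductSpace ℂ H] [CompleteSpace H]
    [NormedAddCommGroup L] [InnerProductSpace ℂ L]
    [MeasurableSpace Ω] (μ : Measure Ω)
    (Λ : Ω → H →L[ℂ] L)
    -- P, Q ∈ GL⁺(H)
    (P Q : H →L[ℂ] H)
    (hQ : Q.IsPositive)
    -- the frame operator S_Λ
    (SΛ : H →L[ℂ] H)
    (hSΛ : ∀ f g : H, ⟪SΛ f, g⟫ = ∫ w, ⟪Λ w f, Λ w g⟫ ∂μ)
    -- P, Q, S_Λ pairwise commute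
    (hPQ : P * Q = Q * P) (hPS : P * SΛ = SΛ * P) (hQS : Q * SΛ = SΛ * Q)
    -- R = (PQ)^{1/2}, the positive square root of PQ
    (R : H →L[ℂ] H) (hR : R.IsPositive) (hRsq : R * R = P * Q) :
    ∀ f : H,
      ∫ w, ⟪Λ w (P f), Λ w (Q f)⟫ ∂μ = ((∫ w, ‖Λ w (R f)‖ ^ 2 ∂μ : ℝ) : ℂ) := by
  intro f
  have hRS : Commute R SΛ :=
    CFC.commute_of_mul_self_eq ((R.nonneg_iff_isPositive).mpr hR) hRsq
      (Commute.mul_left hPS hQS)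
  calc ∫ w, ⟪Λ w (P f), Λ w (Q f)⟫ ∂μ = ⟪SΛ (P f), Q f⟫ := (hSΛ _ _).symm
    _ = ⟪SΛ (R f), R f⟫ :=
      ContinuousLinearMap.inner_apply_apply_eq_of_mul_self_eq hQ.isSelfAdjoint hR.isSelfAdjoint
        hRsq hPQ hQS hRS f
    _ = ∫ w, ⟪Λ w (R f), Λ w (R f)⟫ ∂μ := hSΛ _ _
    _ = ((∫ w, ‖Λ w (R f)‖ ^ 2 ∂μ : ℝ) : ℂ) :=
      integral_inner_self_eq_ofReal_integral_norm_sq _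

/-- If `P, Q ∈ GL⁺(H)` commute with each other and with the frame operator
`S_Λ` of the continuous g-Bessel family `(Λ_w)`, then for every `f ∈ H`,
`∫ ⟨Λ_w P f, Λ_w Q f⟩ dμ = ∫ ‖Λ_w (PQ)^{1/2} f‖² dμ`. -/
theorem controlled_inner_integral_eq_sqrt_norm_integral
    {H L Ω : Type*}
    [NormedAddCommGroup H] [InnerProductSpace ℂ H] [CompleteSpace H]
    [NormedAddCommGroup L] [InnerProductSpace ℂ L] [CompleteSpace L]
    [MeasurableSpace Ω] (μ : Measure Ω)
    (Λ : Ω → H →L[ℂ] L)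
    (hmeas : ∀ f : H, AEStronglyMeasurable (fun w => Λ w f) μ)
    (hint : ∀ f : H, Integrable (fun w => ‖Λ w f‖ ^ 2) μ)
    -- (Λ_w) is a continuous g-Bessel family
    (B₀ : ℝ) (hB₀ : 0 < B₀)
    (hBessel : ∀ f : H, ∫ w, ‖Λ w f‖ ^ 2 ∂μ ≤ B₀ * ‖f‖ ^ 2)
    -- P, Q ∈ GL⁺(H)
    (P Q Pinv Qinv : H →L[ℂ] H)
    (hP : P.IsPositive) (hPinv : P * Pinv = 1 ∧ Pinv * P = 1)
    (hQ : Q.IsPositive) (hQinv : Q * Qinv = 1 ∧ Qinv * Q = 1)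
    -- the frame operator S_Λ
    (SΛ : H →L[ℂ] H)
    (hSΛ : ∀ f g : H, ⟪SΛ f, g⟫ = ∫ w, ⟪Λ w f, Λ w g⟫ ∂μ)
    -- P, Q, S_Λ pairwise commute
    (hPQ : P * Q = Q * P) (hPS : P * SΛ = SΛ * P) (hQS : Q * SΛ = SΛ * Q)
    -- R = (PQ)^{1/2}, the positive square root of PQ
    (R : H →L[ℂ] H) (hR : R.IsPositive) (hRsq : R * R = P * Q) :
    ∀ f : H,
      ∫ w, ⟪Λ w (P f), Λ w (Q f)⟫ ∂μ = ((∫ w, ‖Λ w (R f)‖ ^ 2 ∂μ : ℝ) : ℂ) :=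
  controlled_inner_integral_eq_sqrt_norm_integral_general μ Λ P Q hQ SΛ hSΛ hPQ hPS hQS R hR hRsq
end

section
/- Let P, Q ∈ GL⁺(H) be such that P, Q and the frame operator S_Λ pairwise commute. Then (Λ_w)_{w∈Ω} is a (P, Q)-controlled continuous g-frame with bounds A and B if and only if (Λ_w)_{w∈Ω} is a ((PQ)^{1/2}, (PQ)^{1/2})-controlled continuous g-frame with the same bounds A and B, i.e. A‖f‖² ≤ ∫_Ω ‖Λ_w (PQ)^{1/2} f‖² dμ(w) ≤ B‖f‖² for every f ∈ H. -/
open MeasureTheory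
open scoped ComplexInnerProductSpace

/-! Because `S_Λ` commutes with `P` and `Q` and `Q` is self-adjoint,
`∫ ⟪Λ_w P f, Λ_w Q f⟫ = ⟪S_Λ P Q f, f⟫`. The positive square root `R` of `PQ` is a continuous
function of `PQ`, hence commutes with `S_Λ` as well, and the same computation gives
`∫ ‖Λ_w R f‖² = ⟪S_Λ R R f, f⟫ = ⟪S_Λ P Q f, f⟫`. So both frame expressions coincide for every `f`,
and so do the two sets of frame inequalities. -/

theorem Commute.of_mul_self_eq_of_nonneg_s3 {A : Type*} [NonUnitalCStarAlgebra A] [PartialOrder A]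
    [StarOrderedRing A] {a b r : A} (hr : 0 ≤ r) (hra : r * r = a) (hab : Commute a b) :
    Commute r b := by
  rw [← CFC.sqrt_unique hra hr]
  exact hab.cfcₙ_nnreal NNReal.sqrt

theorem IsSelfAdjoint.inner_apply_apply_eq_of_commute
    {𝕜 E : Type*} [RCLike 𝕜] [NormedAddCommGroup E] [InnerProductSpace 𝕜 E] [CompleteSpace E]
    {T U V : E →L[𝕜] E} (hU : IsSelfAdjoint U) (hTU : Commute T U) (hUV : Commute U V) (f : E) :
    inner 𝕜 (T (V f)) (U f) = inner 𝕜 ((T * (V * U)) f) f := by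
  rw [← ContinuousLinearMap.adjoint_inner_left, hU.adjoint_eq]
  congr 1
  change (U * T * V) f = _
  rw [← hTU.eq, mul_assoc, hUV.eq]

theorem ofReal_integral_norm_sq_eq_inner_self
    {𝕜 E F Ω : Type*} [RCLike 𝕜] [NormedAddCommGroup E] [InnerProductSpace 𝕜 E]
    [NormedAddCommGroup F] [InnerProductSpace 𝕜 F] [MeasurableSpace Ω] {μ : Measure Ω}
    {Λ : Ω → E →L[𝕜] F} {S : E →L[𝕜] E}
    (hS : ∀ f g : E, inner 𝕜 (S f) g = ∫ w, inner 𝕜 (Λ w f) (Λ w g) ∂μ) (f : E) :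
    ((∫ w, ‖Λ w f‖ ^ 2 ∂μ : ℝ) : 𝕜) = inner 𝕜 (S f) f := by
  simp only [hS, inner_self_eq_norm_sq_to_K, ← RCLike.ofReal_pow]
  exact integral_ofReal.symm

theorem re_integral_inner_eq_integral_norm_sq_of_mul_self_eq
    {H L Ω : Type*}
    [NormedAddCommGroup H] [InnerProductSpace ℂ H] [CompleteSpace H]
    [NormedAddCommGroup L] [InnerProductSpace ℂ L] [MeasurableSpace Ω] {μ : Measure Ω}
    {Λ : Ω → H →L[ℂ] L} {S P Q R : H →L[ℂ] H}
    (hS : ∀ f g : H, ⟪S f, g⟫ = ∫ w, ⟪Λ w f, Λ w g⟫ ∂μ)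
    (hQ : IsSelfAdjoint Q) (hR : IsSelfAdjoint R) (hRsq : R * R = P * Q)
    (hPQ : Commute P Q) (hQS : Commute Q S) (hRS : Commute R S) (f : H) :
    (∫ w, ⟪Λ w (P f), Λ w (Q f)⟫ ∂μ).re = ∫ w, ‖Λ w (R f)‖ ^ 2 ∂μ := by
  rw [← hS, hQ.inner_apply_apply_eq_of_commute hQS.symm hPQ.symm, ← hRsq,
    ← hR.inner_apply_apply_eq_of_commute hRS.symm (.refl R),
    ← ofReal_integral_norm_sq_eq_inner_self hS]
  exact Complex.ofReal_re _

theorem controlled_iff_sqrt_controlled_general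
    {H L Ω : Type*}
    [NormedAddCommGroup H] [InnerProductSpace ℂ H] [CompleteSpace H]
    [NormedAddCommGroup L] [InnerProductSpace ℂ L]
    [MeasurableSpace Ω] (μ : Measure Ω)
    (Λ : Ω → H →L[ℂ] L)
    -- P, Q ∈ GL⁺(H)
    (P Q : H →L[ℂ] H)
    (hQ : Q.IsPositive)
    -- the frame operator S_Λ
    (SΛ : H →L[ℂ] H)
    (hSΛ : ∀ f g : H, ⟪SΛ f, g⟫ = ∫ w, ⟪Λ w f, Λ w g⟫ ∂μ)
    -- P, Q, S_Λ pairwise commute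
    (hPQ : P * Q = Q * P) (hPS : P * SΛ = SΛ * P) (hQS : Q * SΛ = SΛ * Q)
    -- R = (PQ)^{1/2}, the positive square root of PQ
    (R : H →L[ℂ] H) (hR : R.IsPositive) (hRsq : R * R = P * Q)
    (A B : ℝ) :
    (∀ f : H,
      A * ‖f‖ ^ 2 ≤ (∫ w, ⟪Λ w (P f), Λ w (Q f)⟫ ∂μ).re ∧
      (∫ w, ⟪Λ w (P f), Λ w (Q f)⟫ ∂μ).re ≤ B * ‖f‖ ^ 2) ↔
    (∀ f : H,
      A * ‖f‖ ^ 2 ≤ ∫ w, ‖Λ w (R f)‖ ^ 2 ∂μ ∧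
      ∫ w, ‖Λ w (R f)‖ ^ 2 ∂μ ≤ B * ‖f‖ ^ 2) := by
  have hRS : Commute R SΛ := (Commute.mul_left hPS hQS).of_mul_self_eq_of_nonneg_s3
    (R.nonneg_iff_isPositive.mpr hR) hRsq
  simp only [re_integral_inner_eq_integral_norm_sq_of_mul_self_eq hSΛ hQ.isSelfAdjoint
    hR.isSelfAdjoint hRsq hPQ hQS hRS]

/-- `(Λ_w)` is a `(P, Q)`-controlled continuous g-frame with bounds `A, B`
iff it is a `((PQ)^{1/2}, (PQ)^{1/2})`-controlled continuous g-frame with the same bounds. -/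
theorem controlled_iff_sqrt_controlled
    {H L Ω : Type*}
    [NormedAddCommGroup H] [InnerProductSpace ℂ H] [CompleteSpace H]
    [NormedAddCommGroup L] [InnerProductSpace ℂ L] [CompleteSpace L]
    [MeasurableSpace Ω] (μ : Measure Ω)
    (Λ : Ω → H →L[ℂ] L)
    (hmeas : ∀ f : H, AEStronglyMeasurable (fun w => Λ w f) μ)
    (hint : ∀ f : H, Integrable (fun w => ‖Λ w f‖ ^ 2) μ)
    -- (Λ_w) is a continuous g-Bessel family
    (B₀ : ℝ) (hB₀ : 0 < B₀)
    (hBessel : ∀ f : H, ∫ w, ‖Λ w f‖ ^ 2 ∂μ ≤ B₀ * ‖f‖ ^ 2)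
    -- P, Q ∈ GL⁺(H)
    (P Q Pinv Qinv : H →L[ℂ] H)
    (hP : P.IsPositive) (hPinv : P * Pinv = 1 ∧ Pinv * P = 1)
    (hQ : Q.IsPositive) (hQinv : Q * Qinv = 1 ∧ Qinv * Q = 1)
    -- the frame operator S_Λ
    (SΛ : H →L[ℂ] H)
    (hSΛ : ∀ f g : H, ⟪SΛ f, g⟫ = ∫ w, ⟪Λ w f, Λ w g⟫ ∂μ)
    -- P, Q, S_Λ pairwise commute
    (hPQ : P * Q = Q * P) (hPS : P * SΛ = SΛ * P) (hQS : Q * SΛ = SΛ * Q)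
    -- R = (PQ)^{1/2}, the positive square root of PQ
    (R : H →L[ℂ] H) (hR : R.IsPositive) (hRsq : R * R = P * Q)
    (A B : ℝ) (hA : 0 < A) (hAB : A ≤ B) :
    (∀ f : H,
      A * ‖f‖ ^ 2 ≤ (∫ w, ⟪Λ w (P f), Λ w (Q f)⟫ ∂μ).re ∧
      (∫ w, ⟪Λ w (P f), Λ w (Q f)⟫ ∂μ).re ≤ B * ‖f‖ ^ 2) ↔
    (∀ f : H,
      A * ‖f‖ ^ 2 ≤ ∫ w, ‖Λ w (R f)‖ ^ 2 ∂μ ∧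
      ∫ w, ‖Λ w (R f)‖ ^ 2 ∂μ ≤ B * ‖f‖ ^ 2) :=
  controlled_iff_sqrt_controlled_general μ Λ P Q hQ SΛ hSΛ hPQ hPS hQS R hR hRsq A B
end

section
/- Let P, Q ∈ GL⁺(H), let (e_v)_{v∈V} be an orthonormal (Hilbert) basis of L indexed by a countable set V, and set u_{w,v} := Λ_w^* e_v ∈ H. Then (Λ_w)_{w∈Ω} is a (P, Q)-controlled continuous g-frame with bounds A and B if and only if the family of vectors (P u_{w,v})_{w∈Ω, v∈V} is a QP^{-1}-controlled continuous frame with bounds A and B, i.e. A‖f‖² ≤ Re ∫_Ω Σ_{v∈V} ⟨f, P u_{w,v}⟩·⟨(QP^{-1})(P u_{w,v}), f⟩ dμ(w) ≤ B‖f‖² for every f ∈ H. -/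
open MeasureTheory
open scoped ComplexInnerProductSpace

/-- with `u_{w,v} := Λ_w^* e_v` for an orthonormal basis `(e_v)` of `L`,
the family `(Λ_w)` is a `(P, Q)`-controlled continuous g-frame with bounds `A, B` iff
the family of vectors `(P u_{w,v})` is a `QP⁻¹`-controlled continuous frame with the
same bounds. -/
theorem controlled_g_frame_iff_induced_controlled_frame
    {H L Ω V : Type*}
    [NormedAddCommGroup H] [InnerProductSpace ℂ H] [CompleteSpace H]
    [NormedAddCommGroup L] [InnerProductSpace ℂ L] [CompleteSpace L]
    [Countable V]
    [MeasurableSpace Ω] (μ : Measure Ω)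
    (Λ : Ω → H →L[ℂ] L)
    (hmeas : ∀ f : H, AEStronglyMeasurable (fun w => Λ w f) μ)
    (hint : ∀ f : H, Integrable (fun w => ‖Λ w f‖ ^ 2) μ)
    -- (Λ_w) is a continuous g-Bessel family
    (B₀ : ℝ) (hB₀ : 0 < B₀)
    (hBessel : ∀ f : H, ∫ w, ‖Λ w f‖ ^ 2 ∂μ ≤ B₀ * ‖f‖ ^ 2)
    -- P, Q ∈ GL⁺(H)
    (P Q Pinv Qinv : H →L[ℂ] H)
    (hP : P.IsPositive) (hPinv : P * Pinv = 1 ∧ Pinv * P = 1)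
    (hQ : Q.IsPositive) (hQinv : Q * Qinv = 1 ∧ Qinv * Q = 1)
    -- an orthonormal (Hilbert) basis of L and the induced vectors u_{w,v} = Λ_w^* e_v
    (e : HilbertBasis V ℂ L)
    (u : Ω → V → H)
    (hu : ∀ (w : Ω) (v : V), u w v = ContinuousLinearMap.adjoint (Λ w) (e v))
    (A B : ℝ) (hA : 0 < A) (hAB : A ≤ B) :
    (∀ f : H,
      A * ‖f‖ ^ 2 ≤ (∫ w, ⟪Λ w (P f), Λ w (Q f)⟫ ∂μ).re ∧
      (∫ w, ⟪Λ w (P f), Λ w (Q f)⟫ ∂μ).re ≤ B * ‖f‖ ^ 2) ↔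
    (∀ f : H,
      A * ‖f‖ ^ 2 ≤
        (∫ w, ∑' v : V, ⟪f, P (u w v)⟫ * ⟪(Q * Pinv) (P (u w v)), f⟫ ∂μ).re ∧
      (∫ w, ∑' v : V, ⟪f, P (u w v)⟫ * ⟪(Q * Pinv) (P (u w v)), f⟫ ∂μ).re ≤
        B * ‖f‖ ^ 2) := by
  have key : ∀ (w : Ω) (f : H),
      (∑' v : V, ⟪f, P (u w v)⟫ * ⟪(Q * Pinv) (P (u w v)), f⟫) =
        ⟪Λ w (P f), Λ w (Q f)⟫ := by
    intro w f
    have hPsa : ContinuousLinearMap.adjoint P = P := hP.isSelfAdjoint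
    have hQsa : ContinuousLinearMap.adjoint Q = Q := hQ.isSelfAdjoint
    have hterm : ∀ v : V,
        ⟪f, P (u w v)⟫ * ⟪(Q * Pinv) (P (u w v)), f⟫ =
          ⟪Λ w (P f), e v⟫ * ⟪e v, Λ w (Q f)⟫ := by
      intro v
      have h1 : ⟪f, P (u w v)⟫ = ⟪Λ w (P f), e v⟫ := by
        rw [hu, ← hPsa, ContinuousLinearMap.adjoint_inner_right,
          ContinuousLinearMap.adjoint_inner_right, hPsa]
      have hPinvP : Pinv (P (u w v)) = u w v := by
        have := congrArg (fun T : H →L[ℂ] H => T (u w v)) hPinv.2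
        simpa using this
      have h2 : ⟪(Q * Pinv) (P (u w v)), f⟫ = ⟪e v, Λ w (Q f)⟫ := by
        rw [ContinuousLinearMap.mul_apply, hPinvP, hu, ← hQsa,
          ContinuousLinearMap.adjoint_inner_left,
          ContinuousLinearMap.adjoint_inner_left, hQsa]
      rw [h1, h2]
    rw [tsum_congr hterm, e.tsum_inner_mul_inner]
  have hIeq : ∀ f : H,
      (∫ w, ∑' v : V, ⟪f, P (u w v)⟫ * ⟪(Q * Pinv) (P (u w v)), f⟫ ∂μ) =
        ∫ w, ⟪Λ w (P f), Λ w (Q f)⟫ ∂μ := fun f =>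
    integral_congr_ae (Filter.Eventually.of_forall fun w => key w f)
  constructor <;> intro h f <;> [rw [hIeq]; rw [← hIeq]] <;> exact h f
end

section
/- Let P, Q ∈ GL⁺(H), let (Λ_w)_{w∈Ω} satisfy ∫_Ω ‖Λ_w P f‖² dμ(w) ≤ B_Λ‖f‖² for all f ∈ H and (Γ_w)_{w∈Ω} satisfy ∫_Ω ‖Γ_w Q f‖² dμ(w) ≤ B_Γ‖f‖² for all f ∈ H. Then there is a unique bounded operator S on H with ⟨S f, g⟩ = ∫_Ω ⟨Γ_w Q f, Λ_w P g⟩ dμ(w) for all f, g ∈ H; moreover ‖S‖ ≤ √(B_Λ B_Γ) and its adjoint satisfies ⟨S^* f, g⟩ = ∫_Ω ⟨Λ_w P f, Γ_w Q g⟩ dμ(w) for all f, g ∈ H. -/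
/-!
The controlled Bessel bound says that `f ↦ (w ↦ Λ_w P f)` is a bounded analysis operator
`U_Λ : H → L²(μ; L)` of norm at most `√B_Λ`, and likewise `U_Γ` for `Γ, Q`. The operator is
`S = U_Λ* U_Γ`: its matrix coefficients are the `L²` inner products `⟪U_Γ f, U_Λ g⟫`, which gives
the norm bound at once, and `S* = U_Γ* U_Λ` gives the adjoint formula.
-/

open MeasureTheory ContinuousLinearMap
open scoped InnerProductSpace ComplexInnerProductSpace

section Analysis

variable {Ω 𝕜 E F : Type*} [MeasurableSpace Ω] {μ : Measure Ω} [RCLike 𝕜]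
  [NormedAddCommGroup E] [NormedSpace 𝕜 E] [NormedAddCommGroup F] [NormedSpace 𝕜 F]

lemma MeasureTheory.MemLp.norm_toLp_two {f : Ω → F} (hf : MemLp f 2 μ) :
    ‖hf.toLp f‖ = √(∫ w, ‖f w‖ ^ 2 ∂μ) := by
  rw [Lp.norm_toLp, toReal_eLpNorm hf.1,
    lpNorm_eq_integral_norm_rpow_toReal two_ne_zero ENNReal.ofNat_ne_top hf.1, Real.sqrt_eq_rpow]
  norm_num

lemma exists_L2_analysisOperator (T : Ω → E →L[𝕜] F)
    (hmeas : ∀ f, AEStronglyMeasurable (fun w => T w f) μ)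
    (hint : ∀ f, Integrable (fun w => ‖T w f‖ ^ 2) μ) {B : ℝ}
    (hB : ∀ f, ∫ w, ‖T w f‖ ^ 2 ∂μ ≤ B * ‖f‖ ^ 2) :
    ∃ U : E →L[𝕜] Lp F 2 μ, (∀ f, U f =ᵐ[μ] fun w => T w f) ∧ ‖U‖ ≤ √B := by
  have hmem (f : E) : MemLp (fun w => T w f) 2 μ :=
    (memLp_two_iff_integrable_sq_norm (hmeas f)).2 (hint f)
  let U : E →ₗ[𝕜] Lp F 2 μ :=
    { toFun f := (hmem f).toLp _
      map_add' f g := by simp only [map_add]; exact (hmem f).toLp_add (hmem g)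
      map_smul' c f := by simp only [map_smul]; exact (hmem f).toLp_const_smul c }
  have hU (f : E) : ‖U f‖ ≤ √B * ‖f‖ := by
    change ‖(hmem f).toLp _‖ ≤ _
    rw [(hmem f).norm_toLp_two, ← Real.sqrt_sq (norm_nonneg f), ← Real.sqrt_mul' _ (sq_nonneg _)]
    exact Real.sqrt_le_sqrt (hB f)
  exact ⟨U.mkContinuous _ hU, fun f => (hmem f).coeFn_toLp,
    U.mkContinuous_norm_le (Real.sqrt_nonneg B) hU⟩

end Analysis

section Synthesis

variable {Ω 𝕜 E F : Type*} [MeasurableSpace Ω] {μ : Measure Ω} [RCLike 𝕜]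
  [NormedAddCommGroup E] [InnerProductSpace 𝕜 E] [CompleteSpace E]
  [NormedAddCommGroup F] [InnerProductSpace 𝕜 F] [CompleteSpace F]

lemma inner_adjoint_comp_apply_of_ae_eq {U V : E →L[𝕜] Lp F 2 μ} {u v : E → Ω → F}
    (hU : ∀ f, U f =ᵐ[μ] u f) (hV : ∀ g, V g =ᵐ[μ] v g) (f g : E) :
    ⟪(adjoint V ∘L U) f, g⟫_𝕜 = ∫ w, ⟪u f w, v g w⟫_𝕜 ∂μ := by
  rw [comp_apply, adjoint_inner_left, L2.inner_def]
  refine integral_congr_ae ?_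
  filter_upwards [hU f, hV g] with w hu hv
  rw [hu, hv]

end Synthesis

theorem controlled_dual_g_frame_operator_exists_unique_general
    {H L Ω : Type*}
    [NormedAddCommGroup H] [InnerProductSpace ℂ H] [CompleteSpace H]
    [NormedAddCommGroup L] [InnerProductSpace ℂ L] [CompleteSpace L]
    [MeasurableSpace Ω] (μ : Measure Ω)
    (Λ Γ : Ω → H →L[ℂ] L)
    (hΛmeas : ∀ f : H, AEStronglyMeasurable (fun w => Λ w f) μ)
    (hΛint : ∀ f : H, Integrable (fun w => ‖Λ w f‖ ^ 2) μ)
    (hΓmeas : ∀ f : H, AEStronglyMeasurable (fun w => Γ w f) μ)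
    (hΓint : ∀ f : H, Integrable (fun w => ‖Γ w f‖ ^ 2) μ)
    -- P, Q ∈ GL⁺(H)
    (P Q : H →L[ℂ] H)
    -- controlled Bessel bounds
    (BΛ BΓ : ℝ) (hBΛ : 0 < BΛ)
    (hΛBessel : ∀ f : H, ∫ w, ‖Λ w (P f)‖ ^ 2 ∂μ ≤ BΛ * ‖f‖ ^ 2)
    (hΓBessel : ∀ f : H, ∫ w, ‖Γ w (Q f)‖ ^ 2 ∂μ ≤ BΓ * ‖f‖ ^ 2) :
    ∃ S : H →L[ℂ] H,
      (∀ f g : H, ⟪S f, g⟫ = ∫ w, ⟪Γ w (Q f), Λ w (P g)⟫ ∂μ) ∧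
      ‖S‖ ≤ Real.sqrt (BΛ * BΓ) ∧
      (∀ f g : H,
        ⟪ContinuousLinearMap.adjoint S f, g⟫ = ∫ w, ⟪Λ w (P f), Γ w (Q g)⟫ ∂μ) ∧
      ∀ S' : H →L[ℂ] H,
        (∀ f g : H, ⟪S' f, g⟫ = ∫ w, ⟪Γ w (Q f), Λ w (P g)⟫ ∂μ) → S' = S := by
  obtain ⟨UΛ, hUΛ, hUΛ_norm⟩ := exists_L2_analysisOperator (fun w => Λ w ∘L P)
    (fun f => hΛmeas (P f)) (fun f => hΛint (P f)) hΛBessel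
  obtain ⟨UΓ, hUΓ, hUΓ_norm⟩ := exists_L2_analysisOperator (fun w => Γ w ∘L Q)
    (fun f => hΓmeas (Q f)) (fun f => hΓint (Q f)) hΓBessel
  have hS := inner_adjoint_comp_apply_of_ae_eq hUΓ hUΛ
  refine ⟨adjoint UΛ ∘L UΓ, hS, ?_, ?_, fun S' hS' => ?_⟩
  · calc ‖adjoint UΛ ∘L UΓ‖ ≤ ‖UΛ‖ * ‖UΓ‖ := by
          simpa only [LinearIsometryEquiv.norm_map] using opNorm_comp_le (adjoint UΛ) UΓ
      _ ≤ √BΛ * √BΓ := by gcongr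
      _ = √(BΛ * BΓ) := (Real.sqrt_mul hBΛ.le _).symm
  · rw [adjoint_comp, adjoint_adjoint]
    exact inner_adjoint_comp_apply_of_ae_eq hUΛ hUΓ
  · exact ext fun f => ext_inner_right ℂ fun g => by rw [hS', hS]; rfl

/-- Existence and uniqueness of the controlled dual g-frame operator `S` with
`⟨S f, g⟩ = ∫ ⟨Γ_w Q f, Λ_w P g⟩ dμ`, together with the norm bound `‖S‖ ≤ √(B_Λ B_Γ)` and
the formula for its adjoint. -/
theorem controlled_dual_g_frame_operator_exists_unique
    {H L Ω : Type*}
    [NormedAddCommGroup H] [InnerProductSpace ℂ H] [CompleteSpace H]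
    [NormedAddCommGroup L] [InnerProductSpace ℂ L] [CompleteSpace L]
    [MeasurableSpace Ω] (μ : Measure Ω)
    (Λ Γ : Ω → H →L[ℂ] L)
    (hΛmeas : ∀ f : H, AEStronglyMeasurable (fun w => Λ w f) μ)
    (hΛint : ∀ f : H, Integrable (fun w => ‖Λ w f‖ ^ 2) μ)
    (hΓmeas : ∀ f : H, AEStronglyMeasurable (fun w => Γ w f) μ)
    (hΓint : ∀ f : H, Integrable (fun w => ‖Γ w f‖ ^ 2) μ)
    -- P, Q ∈ GL⁺(H)
    (P Q Pinv Qinv : H →L[ℂ] H)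
    (hP : P.IsPositive) (hPinv : P * Pinv = 1 ∧ Pinv * P = 1)
    (hQ : Q.IsPositive) (hQinv : Q * Qinv = 1 ∧ Qinv * Q = 1)
    -- controlled Bessel bounds
    (BΛ BΓ : ℝ) (hBΛ : 0 < BΛ) (hBΓ : 0 < BΓ)
    (hΛBessel : ∀ f : H, ∫ w, ‖Λ w (P f)‖ ^ 2 ∂μ ≤ BΛ * ‖f‖ ^ 2)
    (hΓBessel : ∀ f : H, ∫ w, ‖Γ w (Q f)‖ ^ 2 ∂μ ≤ BΓ * ‖f‖ ^ 2) :
    ∃ S : H →L[ℂ] H,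
      (∀ f g : H, ⟪S f, g⟫ = ∫ w, ⟪Γ w (Q f), Λ w (P g)⟫ ∂μ) ∧
      ‖S‖ ≤ Real.sqrt (BΛ * BΓ) ∧
      (∀ f g : H,
        ⟪ContinuousLinearMap.adjoint S f, g⟫ = ∫ w, ⟪Λ w (P f), Γ w (Q g)⟫ ∂μ) ∧
      ∀ S' : H →L[ℂ] H,
        (∀ f g : H, ⟪S' f, g⟫ = ∫ w, ⟪Γ w (Q f), Λ w (P g)⟫ ∂μ) → S' = S :=
  controlled_dual_g_frame_operator_exists_unique_general μ Λ Γ hΛmeas hΛint hΓmeas hΓint P Q BΛ BΓ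
    hBΛ hΛBessel hΓBessel
end

section
/- Let P, Q ∈ GL⁺(H), let (Λ_w)_{w∈Ω} satisfy ∫_Ω ‖Λ_w P f‖² dμ(w) ≤ B_Λ‖f‖² for all f ∈ H and (Γ_w)_{w∈Ω} satisfy ∫_Ω ‖Γ_w Q f‖² dμ(w) ≤ B_Γ‖f‖² for all f ∈ H, and assume the duality relation ⟨f, g⟩ = ∫_Ω ⟨Λ_w P f, Γ_w Q g⟩ dμ(w) holds for all f, g ∈ H. Then for every f ∈ H, (1/B_Γ)·‖f‖² ≤ ∫_Ω ‖Λ_w P f‖² dμ(w) and (1/B_Λ)·‖f‖² ≤ ∫_Ω ‖Γ_w Q f‖² dμ(w); that is, (Λ_w) is a (P, P)-controlled continuous g-frame and (Γ_w) is a (Q, Q)-controlled continuous g-frame. -/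
/-!
Applying the duality relation with `g = f` and Cauchy–Schwarz in `L²(Ω; L)` gives
`‖f‖⁴ ≤ (∫ ‖Λ_w P f‖²) (∫ ‖Γ_w Q f‖²)`; bounding either factor by its Bessel bound
`B ‖f‖²` and dividing by `‖f‖²` leaves the lower frame bound for the other family.
-/

open MeasureTheory
open scoped ComplexInnerProductSpace

namespace MeasureTheory

variable {α E : Type*} [MeasurableSpace α] {μ : Measure α} [NormedAddCommGroup E]

theorem MemLp.sq_norm_toLp {f : α → E} (hf : MemLp f 2 μ) :
    ‖hf.toLp f‖ ^ 2 = ∫ a, ‖f a‖ ^ 2 ∂μ := by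
  have hint : 0 ≤ ∫ a, ‖f a‖ ^ 2 ∂μ := integral_nonneg fun _ ↦ by positivity
  rw [Lp.norm_toLp, toReal_eLpNorm hf.1,
    lpNorm_eq_integral_norm_rpow_toReal two_ne_zero ENNReal.ofNat_ne_top hf.1]
  simp only [ENNReal.toReal_ofNat, Real.rpow_two]
  exact_mod_cast Real.rpow_inv_natCast_pow hint two_ne_zero

theorem sq_norm_integral_inner_le {𝕜 : Type*} [RCLike 𝕜] [InnerProductSpace 𝕜 E]
    {f g : α → E} (hf : MemLp f 2 μ) (hg : MemLp g 2 μ) :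
    ‖∫ a, inner 𝕜 (f a) (g a) ∂μ‖ ^ 2 ≤ (∫ a, ‖f a‖ ^ 2 ∂μ) * ∫ a, ‖g a‖ ^ 2 ∂μ := by
  have h_inner : ∫ a, inner 𝕜 (f a) (g a) ∂μ = inner 𝕜 (hf.toLp f) (hg.toLp g) := by
    rw [L2.inner_def]
    refine integral_congr_ae ?_
    filter_upwards [hf.coeFn_toLp, hg.coeFn_toLp] with a hfa hga
    rw [hfa, hga]
  rw [h_inner, ← hf.sq_norm_toLp, ← hg.sq_norm_toLp, ← mul_pow]
  exact pow_le_pow_left₀ (norm_nonneg _) (norm_inner_le_norm _ _) 2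

end MeasureTheory

theorem one_div_mul_le_of_sq_le_mul {a I J B : ℝ} (hI : 0 ≤ I) (hB : 0 < B)
    (h : a ^ 2 ≤ I * J) (hJ : J ≤ B * a) : 1 / B * a ≤ I := by
  rw [one_div_mul_eq_div, div_le_iff₀ hB]
  rcases le_or_gt a 0 with ha | ha
  · nlinarith
  · exact le_of_mul_le_mul_right (by nlinarith) ha

theorem controlled_dual_implies_frames_general
    {H L Ω : Type*}
    [NormedAddCommGroup H] [InnerProductSpace ℂ H]
    [NormedAddCommGroup L] [InnerProductSpace ℂ L]
    [MeasurableSpace Ω] (μ : Measure Ω)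
    (Λ Γ : Ω → H →L[ℂ] L)
    (hΛmeas : ∀ f : H, AEStronglyMeasurable (fun w => Λ w f) μ)
    (hΛint : ∀ f : H, Integrable (fun w => ‖Λ w f‖ ^ 2) μ)
    (hΓmeas : ∀ f : H, AEStronglyMeasurable (fun w => Γ w f) μ)
    (hΓint : ∀ f : H, Integrable (fun w => ‖Γ w f‖ ^ 2) μ)
    -- P, Q ∈ GL⁺(H)
    (P Q : H →L[ℂ] H)
    -- controlled Bessel bounds
    (BΛ BΓ : ℝ) (hBΛ : 0 < BΛ) (hBΓ : 0 < BΓ)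
    (hΛBessel : ∀ f : H, ∫ w, ‖Λ w (P f)‖ ^ 2 ∂μ ≤ BΛ * ‖f‖ ^ 2)
    (hΓBessel : ∀ f : H, ∫ w, ‖Γ w (Q f)‖ ^ 2 ∂μ ≤ BΓ * ‖f‖ ^ 2)
    -- the controlled duality relation
    (hdual : ∀ f g : H, (⟪f, g⟫ : ℂ) = ∫ w, ⟪Λ w (P f), Γ w (Q g)⟫ ∂μ) :
    ∀ f : H,
      1 / BΓ * ‖f‖ ^ 2 ≤ ∫ w, ‖Λ w (P f)‖ ^ 2 ∂μ ∧
      1 / BΛ * ‖f‖ ^ 2 ≤ ∫ w, ‖Γ w (Q f)‖ ^ 2 ∂μ := by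
  intro f
  have hΛ : MemLp (fun w => Λ w (P f)) 2 μ :=
    (memLp_two_iff_integrable_sq_norm (hΛmeas (P f))).mpr (hΛint (P f))
  have hΓ : MemLp (fun w => Γ w (Q f)) 2 μ :=
    (memLp_two_iff_integrable_sq_norm (hΓmeas (Q f))).mpr (hΓint (Q f))
  have hCS : (‖f‖ ^ 2) ^ 2 ≤ (∫ w, ‖Λ w (P f)‖ ^ 2 ∂μ) * ∫ w, ‖Γ w (Q f)‖ ^ 2 ∂μ := by
    simpa only [← hdual f f, inner_self_eq_norm_sq_to_K, Complex.coe_algebraMap, norm_pow,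
      Complex.norm_real, norm_norm] using sq_norm_integral_inner_le (𝕜 := ℂ) hΛ hΓ
  refine ⟨one_div_mul_le_of_sq_le_mul (integral_nonneg fun _ ↦ by positivity) hBΓ hCS
    (hΓBessel f), one_div_mul_le_of_sq_le_mul (integral_nonneg fun _ ↦ by positivity) hBΛ ?_
    (hΛBessel f)⟩
  rwa [mul_comm] at hCS

/-- If the controlled duality relation holds, then `(Λ_w)` is a
`(P, P)`-controlled continuous g-frame with lower bound `1/B_Γ` and `(Γ_w)` is a
`(Q, Q)`-controlled continuous g-frame with lower bound `1/B_Λ`. -/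
theorem controlled_dual_implies_frames
    {H L Ω : Type*}
    [NormedAddCommGroup H] [InnerProductSpace ℂ H] [CompleteSpace H]
    [NormedAddCommGroup L] [InnerProductSpace ℂ L] [CompleteSpace L]
    [MeasurableSpace Ω] (μ : Measure Ω)
    (Λ Γ : Ω → H →L[ℂ] L)
    (hΛmeas : ∀ f : H, AEStronglyMeasurable (fun w => Λ w f) μ)
    (hΛint : ∀ f : H, Integrable (fun w => ‖Λ w f‖ ^ 2) μ)
    (hΓmeas : ∀ f : H, AEStronglyMeasurable (fun w => Γ w f) μ)
    (hΓint : ∀ f : H, Integrable (fun w => ‖Γ w f‖ ^ 2) μ)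
    -- P, Q ∈ GL⁺(H)
    (P Q Pinv Qinv : H →L[ℂ] H)
    (hP : P.IsPositive) (hPinv : P * Pinv = 1 ∧ Pinv * P = 1)
    (hQ : Q.IsPositive) (hQinv : Q * Qinv = 1 ∧ Qinv * Q = 1)
    -- controlled Bessel bounds
    (BΛ BΓ : ℝ) (hBΛ : 0 < BΛ) (hBΓ : 0 < BΓ)
    (hΛBessel : ∀ f : H, ∫ w, ‖Λ w (P f)‖ ^ 2 ∂μ ≤ BΛ * ‖f‖ ^ 2)
    (hΓBessel : ∀ f : H, ∫ w, ‖Γ w (Q f)‖ ^ 2 ∂μ ≤ BΓ * ‖f‖ ^ 2)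
    -- the controlled duality relation
    (hdual : ∀ f g : H, (⟪f, g⟫ : ℂ) = ∫ w, ⟪Λ w (P f), Γ w (Q g)⟫ ∂μ) :
    ∀ f : H,
      1 / BΓ * ‖f‖ ^ 2 ≤ ∫ w, ‖Λ w (P f)‖ ^ 2 ∂μ ∧
      1 / BΛ * ‖f‖ ^ 2 ≤ ∫ w, ‖Γ w (Q f)‖ ^ 2 ∂μ :=
  controlled_dual_implies_frames_general μ Λ Γ hΛmeas hΛint hΓmeas hΓint P Q BΛ BΓ hBΛ hBΓ hΛBessel
    hΓBessel hdual
end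

section
/- Let P, Q ∈ GL⁺(H) be such that P, Q and the frame operator S_Λ pairwise commute. Then the following are equivalent: (i) (Λ_w)_{w∈Ω} is a (P, Q)-controlled continuous g-Bessel family with bound B, i.e. Re ∫_Ω ⟨Λ_w P f, Λ_w Q f⟩ dμ(w) ≤ B‖f‖² for all f ∈ H; (ii) there is a bounded linear operator U : L²(Ω, μ; L) → H with ‖U‖ ≤ √B such that ⟨U F, g⟩ = ∫_Ω ⟨F(w), Λ_w (QP)^{1/2} g⟩ dμ(w) for every F ∈ L²(Ω, μ; L) and g ∈ H. -/
open MeasureTheory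
open scoped ComplexInnerProductSpace ENNReal

/-! With `T f := (Λ_w (R f))_w ∈ L²(Ω, μ; L)`, condition (ii) says exactly that `T` has an adjoint of
norm at most `√B`, i.e. that `‖T f‖ ≤ √B ‖f‖`. Since `R` is the positive square root of `QP`, it
commutes with everything that commutes with `QP`, in particular with `S_Λ`; hence
`‖T f‖² = ⟨S_Λ R f, R f⟩ = ⟨R S_Λ R f, f⟩ = ⟨S_Λ Q P f, f⟩ = ⟨S_Λ P f, Q f⟩`, which is the
controlled Bessel integral of (i). -/

theorem Commute.of_mul_self_of_nonneg {A : Type*} [CStarAlgebra A] [PartialOrder A]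
    [StarOrderedRing A] {a b : A} (ha : 0 ≤ a) (h : Commute (a * a) b) : Commute a b :=
  CFC.sqrt_mul_self a ▸ h.cfcₙ_nnreal _

theorem ContinuousLinearMap.inner_apply_apply_eq_of_mul_self_eq_s12
    {H : Type*} [NormedAddCommGroup H] [InnerProductSpace ℂ H] [CompleteSpace H]
    {S R P Q : H →L[ℂ] H} (hR : IsSelfAdjoint R) (hQ : IsSelfAdjoint Q)
    (hRS : Commute R S) (hQS : Commute Q S) (hRsq : R * R = Q * P) (f g : H) :
    ⟪S (R f), R g⟫ = ⟪S (P f), Q g⟫ := by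
  have hRSR : R * S * R = Q * (S * P) := by
    rw [hRS.eq, mul_assoc, hRsq, ← mul_assoc, ← hQS.eq, mul_assoc]
  calc ⟪S (R f), R g⟫ = ⟪(R * S * R) f, g⟫ := (hR.isSymmetric _ _).symm
    _ = ⟪(Q * (S * P)) f, g⟫ := by rw [hRSR]
    _ = ⟪S (P f), Q g⟫ := hQ.isSymmetric _ _

theorem LinearMap.forall_norm_apply_le_iff_exists_adjoint {𝕜 E F : Type*} [RCLike 𝕜]
    [NormedAddCommGroup E] [InnerProductSpace 𝕜 E] [CompleteSpace E]
    [NormedAddCommGroup F] [InnerProductSpace 𝕜 F] [CompleteSpace F]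
    (T : E →ₗ[𝕜] F) {c : ℝ} (hc : 0 ≤ c) :
    (∀ x, ‖T x‖ ≤ c * ‖x‖) ↔
      ∃ U : F →L[𝕜] E, ‖U‖ ≤ c ∧ ∀ y x, inner 𝕜 (U y) x = inner 𝕜 y (T x) := by
  constructor
  · intro hT
    refine ⟨(T.mkContinuous c hT).adjoint, ?_, fun y x => ?_⟩
    · rw [ContinuousLinearMap.adjoint.norm_map]
      exact T.mkContinuous_norm_le hc hT
    · rw [ContinuousLinearMap.adjoint_inner_left, LinearMap.mkContinuous_apply]
  · rintro ⟨U, hU, hUT⟩ x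
    have hTx : T x = U.adjoint x := ext_inner_left 𝕜 fun y => by
      rw [ContinuousLinearMap.adjoint_inner_right, hUT]
    calc ‖T x‖ = ‖U.adjoint x‖ := by rw [hTx]
      _ ≤ ‖U‖ * ‖x‖ := by
        simpa only [ContinuousLinearMap.adjoint.norm_map] using U.adjoint.le_opNorm x
      _ ≤ c * ‖x‖ := by gcongr

section Analysis

variable {H L Ω : Type*} [NormedAddCommGroup H] [InnerProductSpace ℂ H]
  [NormedAddCommGroup L] [InnerProductSpace ℂ L] [MeasurableSpace Ω] {μ : Measure Ω}
  {Λ : Ω → H →L[ℂ] L}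

/-- The analysis operator `f ↦ (Λ_w f)_w`, as a linear map: it is continuous only for Bessel
families. -/
noncomputable def analysisMap (hΛ : ∀ f, MemLp (fun w => Λ w f) 2 μ) : H →ₗ[ℂ] Lp L 2 μ where
  toFun f := (hΛ f).toLp _
  map_add' f g := by
    rw [← MemLp.toLp_add]
    exact MemLp.toLp_congr _ _ (.of_forall fun w => map_add (Λ w) f g)
  map_smul' c f := by
    rw [← MemLp.toLp_const_smul]
    exact MemLp.toLp_congr _ _ (.of_forall fun w => map_smul (Λ w) c f)

variable (hΛ : ∀ f, MemLp (fun w => Λ w f) 2 μ)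

theorem analysisMap_ae_eq (f : H) : analysisMap hΛ f =ᵐ[μ] fun w => Λ w f :=
  (hΛ f).coeFn_toLp

theorem inner_analysisMap_right (F : Lp L 2 μ) (f : H) :
    ⟪F, analysisMap hΛ f⟫ = ∫ w, ⟪F w, Λ w f⟫ ∂μ := by
  rw [L2.inner_def]
  refine integral_congr_ae ?_
  filter_upwards [analysisMap_ae_eq hΛ f] with w hw
  rw [hw]

theorem inner_analysisMap_analysisMap (f g : H) :
    ⟪analysisMap hΛ f, analysisMap hΛ g⟫ = ∫ w, ⟪Λ w f, Λ w g⟫ ∂μ := by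
  rw [inner_analysisMap_right]
  refine integral_congr_ae ?_
  filter_upwards [analysisMap_ae_eq hΛ f] with w hw
  rw [hw]

end Analysis

theorem controlled_bessel_iff_synthesis_operator_general
    {H L Ω : Type*}
    [NormedAddCommGroup H] [InnerProductSpace ℂ H] [CompleteSpace H]
    [NormedAddCommGroup L] [InnerProductSpace ℂ L] [CompleteSpace L]
    [MeasurableSpace Ω] (μ : Measure Ω)
    (Λ : Ω → H →L[ℂ] L)
    (hmeas : ∀ f : H, AEStronglyMeasurable (fun w => Λ w f) μ)
    (hint : ∀ f : H, Integrable (fun w => ‖Λ w f‖ ^ 2) μ)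
    -- P, Q ∈ GL⁺(H)
    (P Q : H →L[ℂ] H)
    (hQ : Q.IsPositive)
    -- the frame operator S_Λ
    (SΛ : H →L[ℂ] H)
    (hSΛ : ∀ f g : H, ⟪SΛ f, g⟫ = ∫ w, ⟪Λ w f, Λ w g⟫ ∂μ)
    -- P, Q, S_Λ pairwise commute
    (hPS : P * SΛ = SΛ * P) (hQS : Q * SΛ = SΛ * Q)
    -- R = (QP)^{1/2}, the positive square root of QP
    (R : H →L[ℂ] H) (hR : R.IsPositive) (hRsq : R * R = Q * P)
    (B : ℝ) (hB : 0 < B) :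
    (∀ f : H, (∫ w, ⟪Λ w (P f), Λ w (Q f)⟫ ∂μ).re ≤ B * ‖f‖ ^ 2) ↔
    (∃ U : Lp L 2 μ →L[ℂ] H, ‖U‖ ≤ Real.sqrt B ∧
      ∀ (F : Lp L 2 μ) (g : H), ⟪U F, g⟫ = ∫ w, ⟪F w, Λ w (R g)⟫ ∂μ) := by
  have hΛ f : MemLp (fun w => Λ w f) 2 μ :=
    (memLp_two_iff_integrable_sq_norm (hmeas f)).mpr (hint f)
  let T := (analysisMap hΛ).comp (R : H →ₗ[ℂ] H)
  have hRS : Commute R SΛ :=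
    .of_mul_self_of_nonneg ((R.nonneg_iff_isPositive).mpr hR) (hRsq ▸ Commute.mul_left hQS hPS)
  have hT f : ‖T f‖ ^ 2 = (∫ w, ⟪Λ w (P f), Λ w (Q f)⟫ ∂μ).re := by
    rw [← inner_self_eq_norm_sq (𝕜 := ℂ), LinearMap.comp_apply, inner_analysisMap_analysisMap,
      ← hSΛ, ← hSΛ, ContinuousLinearMap.coe_coe,
      ContinuousLinearMap.inner_apply_apply_eq_of_mul_self_eq_s12 hR.isSelfAdjoint hQ.isSelfAdjoint
        hRS hQS hRsq, RCLike.re_to_complex]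
  calc (∀ f : H, (∫ w, ⟪Λ w (P f), Λ w (Q f)⟫ ∂μ).re ≤ B * ‖f‖ ^ 2)
      ↔ ∀ f, ‖T f‖ ≤ Real.sqrt B * ‖f‖ := forall_congr' fun f => by
        rw [← hT, ← sq_le_sq₀ (norm_nonneg _) (by positivity), mul_pow, Real.sq_sqrt hB.le]
    _ ↔ _ := T.forall_norm_apply_le_iff_exists_adjoint (Real.sqrt_nonneg B)
    _ ↔ _ := by
      simp only [T, LinearMap.comp_apply, inner_analysisMap_right, ContinuousLinearMap.coe_coe]

/-- `(Λ_w)` is a `(P, Q)`-controlled continuous g-Bessel family with bound `B`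
iff the synthesis-type operator `U : L²(Ω, μ; L) → H` with
`⟨U F, g⟩ = ∫ ⟨F(w), Λ_w (QP)^{1/2} g⟩ dμ` exists as a bounded operator with `‖U‖ ≤ √B`. -/
theorem controlled_bessel_iff_synthesis_operator
    {H L Ω : Type*}
    [NormedAddCommGroup H] [InnerProductSpace ℂ H] [CompleteSpace H]
    [NormedAddCommGroup L] [InnerProductSpace ℂ L] [CompleteSpace L]
    [MeasurableSpace Ω] (μ : Measure Ω)
    (Λ : Ω → H →L[ℂ] L)
    (hmeas : ∀ f : H, AEStronglyMeasurable (fun w => Λ w f) μ)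
    (hint : ∀ f : H, Integrable (fun w => ‖Λ w f‖ ^ 2) μ)
    -- (Λ_w) is a continuous g-Bessel family
    (B₀ : ℝ) (hB₀ : 0 < B₀)
    (hBessel : ∀ f : H, ∫ w, ‖Λ w f‖ ^ 2 ∂μ ≤ B₀ * ‖f‖ ^ 2)
    -- P, Q ∈ GL⁺(H)
    (P Q Pinv Qinv : H →L[ℂ] H)
    (hP : P.IsPositive) (hPinv : P * Pinv = 1 ∧ Pinv * P = 1)
    (hQ : Q.IsPositive) (hQinv : Q * Qinv = 1 ∧ Qinv * Q = 1)
    -- the frame operator S_Λ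
    (SΛ : H →L[ℂ] H)
    (hSΛ : ∀ f g : H, ⟪SΛ f, g⟫ = ∫ w, ⟪Λ w f, Λ w g⟫ ∂μ)
    -- P, Q, S_Λ pairwise commute
    (hPQ : P * Q = Q * P) (hPS : P * SΛ = SΛ * P) (hQS : Q * SΛ = SΛ * Q)
    -- R = (QP)^{1/2}, the positive square root of QP
    (R : H →L[ℂ] H) (hR : R.IsPositive) (hRsq : R * R = Q * P)
    (B : ℝ) (hB : 0 < B) :
    (∀ f : H, (∫ w, ⟪Λ w (P f), Λ w (Q f)⟫ ∂μ).re ≤ B * ‖f‖ ^ 2) ↔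
    (∃ U : Lp L 2 μ →L[ℂ] H, ‖U‖ ≤ Real.sqrt B ∧
      ∀ (F : Lp L 2 μ) (g : H), ⟪U F, g⟫ = ∫ w, ⟪F w, Λ w (R g)⟫ ∂μ) :=
  controlled_bessel_iff_synthesis_operator_general μ Λ hmeas hint P Q hQ SΛ hSΛ hPS hQS R hR hRsq B
    hB
end
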